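/- arXiv:1608.08163 — 13 statements merged into one kernel-verified Lean document; each statement's English description precedes it below -/
import Mathlib

section
/- For all x, y in M, R₁(y, R₂(x,y)) = x. -/
variable {R : Type*} [CommRing R] {M : Type*} [AddCommGroup M] [Module R M]

/-- The Alexander quandle operation `x * y = t x + (1 - t) y`. -/
def star (t : R) (x y : M) : M := t • x + (1 - t) • y

/-- The first singular operation `R1 (x, y) = (1 - t - B) x + (t + B) y`. -/
def R1 (t B : R) (x y : M) : M := (1 - t - B) • x + (t + B) • y

/-- The second singular operation `R2 (x, y) = (1 - B) x + B y`. -/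
def R2 (B : R) (x y : M) : M := (1 - B) • x + B • y

theorem R1_R2_axiom (t B : R) (ht : t ^ 2 = 1) (hB : B * (1 + t) = 0) (htB : t = (1 - B) ^ 2) :
    ∀ x y : M, R1 t B y (R2 B x y) = x := by
  intro x y
  have h1 : (t + B) * (1 - B) = 1 := by linear_combination -hB + htB
  have h2 : (t + B) * B + (1 - t - B) = 0 := by linear_combination hB - htB
  simp only [R1, R2, smul_add, smul_smul, h1, one_smul]
  rw [add_comm ((1 - t - B) • y), add_assoc, ← add_smul, h2, zero_smul, add_zero]
end

section
/- For all x, y in M, R₂(R₂(x,y), R₁(x,y)) = x. -/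
variable {R : Type*} [CommRing R] {M : Type*} [AddCommGroup M] [Module R M]

theorem R2_R2_R1_axiom (t B : R) (ht : t ^ 2 = 1) (hB : B * (1 + t) = 0) (htB : t = (1 - B) ^ 2) :
    ∀ x y : M, R2 B (R2 B x y) (R1 t B x y) = x := by
  intro x y
  simp only [R1, R2]
  match_scalars
  · linear_combination -hB
  · linear_combination hB
end

section
/- For all x, y in M, R₂(R₁(x,y), x) = y. -/
variable {R : Type*} [CommRing R] {M : Type*} [AddCommGroup M] [Module R M]

theorem R2_R1_axiom (t B : R) (ht : t ^ 2 = 1) (hB : B * (1 + t) = 0) (htB : t = (1 - B) ^ 2) :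
    ∀ x y : M, R2 B (R1 t B x y) x = y := by
  intro x y
  have h1 : (1 - B) * (1 - t - B) + B = 0 := by linear_combination hB - htB
  have h2 : (1 - B) * (t + B) = 1 := by linear_combination htB - hB
  simp only [R1, R2, smul_add, smul_smul]
  rw [h2, one_smul, add_right_comm, ← add_smul, h1, zero_smul, zero_add]
end

section
/- For all x, y in M, R₁(R₂(x,y), R₁(x,y)) = y. -/
variable {R : Type*} [CommRing R] {M : Type*} [AddCommGroup M] [Module R M]

theorem R1_R2_R1_axiom (t B : R) (ht : t ^ 2 = 1) (hB : B * (1 + t) = 0) (htB : t = (1 - B) ^ 2) :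
    ∀ x y : M, R1 t B (R2 B x y) (R1 t B x y) = y := by
  intro x y
  simp only [R1, R2]
  match_scalars
  · linear_combination -ht - hB
  · linear_combination ht + hB
end

section
/- For all x, y in M, R₂(y, R₂(x,y)) = R₁(x,y). -/
variable {R : Type*} [CommRing R] {M : Type*} [AddCommGroup M] [Module R M]

theorem R2_rotation_axiom (t B : R) (ht : t ^ 2 = 1) (hB : B * (1 + t) = 0) (htB : t = (1 - B) ^ 2) :
    ∀ x y : M, R2 B y (R2 B x y) = R1 t B x y := by
  intro x y
  simp only [R1, R2, smul_add, smul_smul, ← add_smul]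
  rw [show (1:R) - t - B = B * (1 - B) by rw [htB]; ring,
      show t + B = 1 - B + B * B by rw [htB]; ring]
  module
end

section
/- For all x, y in M, R₁(R₁(x,y), x) = R₂(x,y). -/
variable {R : Type*} [CommRing R] {M : Type*} [AddCommGroup M] [Module R M]

theorem R1_rotation_axiom (t B : R) (ht : t ^ 2 = 1) (hB : B * (1 + t) = 0) (htB : t = (1 - B) ^ 2) :
    ∀ x y : M, R1 t B (R1 t B x y) x = R2 B x y := by
  intro x y
  subst htB
  simp only [R1, R2, smul_add, smul_smul]
  match_scalars
  · linear_combination B * hB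
  · linear_combination -B * hB
end

section
/- For all x, y, z in M, (y ∗ z) ∗ R₂(x,z) = (y ∗ x) ∗ R₁(x,z) (the axiom coming from the singular Reidemeister move RIVa). -/
variable {R : Type*} [CommRing R] {M : Type*} [AddCommGroup M] [Module R M]

theorem RIVa_axiom (t B : R) (ht : t ^ 2 = 1) (hB : B * (1 + t) = 0) (htB : t = (1 - B) ^ 2) :
    ∀ x y z : M, star t (star t y z) (R2 B x z) = star t (star t y x) (R1 t B x z) := by
  intro x y z
  simp only [_root_.star, R1, R2, smul_add, smul_smul]
  module
end

section
/- For all x, y in M, R₁(x,y) = R₂(y ∗ x, x) (the first axiom coming from the singular Reidemeister move RV). -/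
variable {R : Type*} [CommRing R] {M : Type*} [AddCommGroup M] [Module R M]

theorem RV_first_axiom (t B : R) (ht : t ^ 2 = 1) (hB : B * (1 + t) = 0) (htB : t = (1 - B) ^ 2) :
    ∀ x y : M, R1 t B x y = R2 B (star t y x) x := by
  intro x y
  unfold R1 R2 _root_.star
  match_scalars
  · linear_combination -hB
  · linear_combination hB
end

section
/- For all x, y in M, R₂(x,y) = R₁(y ∗ x, x) ∗ R₂(y ∗ x, x) (the second axiom coming from the singular Reidemeister move RV). -/
variable {R : Type*} [CommRing R] {M : Type*} [AddCommGroup M] [Module R M]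

theorem RV_second_axiom (t B : R) (ht : t ^ 2 = 1) (hB : B * (1 + t) = 0) (htB : t = (1 - B) ^ 2) :
    ∀ x y : M, R2 B x y = star t (R1 t B (star t y x) x) (R2 B (star t y x) x) := by
  intro x y
  simp only [_root_.star, R1, R2, smul_add, smul_smul]
  match_scalars
  · linear_combination -hB - t * ht
  · linear_combination hB + t * ht
end

section
/- For all x, y, z in M, R₁(x ∗ y, z) ∗ y = R₁(x, z ∗ y) (the first axiom coming from the singular Reidemeister move RIVb). -/
variable {R : Type*} [CommRing R] {M : Type*} [AddCommGroup M] [Module R M]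

theorem RIVb_first_axiom (t B : R) (ht : t ^ 2 = 1) (hB : B * (1 + t) = 0) (htB : t = (1 - B) ^ 2) :
    ∀ x y z : M, star t (R1 t B (star t x y) z) y = R1 t B x (star t z y) := by
  intro x y z
  simp only [_root_.star, R1]
  match_scalars
  · linear_combination (1 - t - B) * ht
  · linear_combination (t - 1) * ht + (t - 1) * hB
  · ring
end

section
/- For all x, y, z in M, R₂(x ∗ y, z) = R₂(x, z ∗ y) ∗ y (the second axiom coming from the singular Reidemeister move RIVb). -/
variable {R : Type*} [CommRing R] {M : Type*} [AddCommGroup M] [Module R M]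

theorem RIVb_second_axiom (t B : R) (ht : t ^ 2 = 1) (hB : B * (1 + t) = 0) (htB : t = (1 - B) ^ 2) :
    ∀ x y z : M, R2 B (star t x y) z = star t (R2 B x (star t z y)) y := by
  intro x y z
  simp only [_root_.star, R2]
  match_scalars
  · ring
  · linear_combination (t - 1) * hB
  · linear_combination -B * ht
end

section
/- For all x, y in M, the pair of equations x = R₁(R₁(x,y), R₂(x,y)) and y = R₂(R₁(x,y), R₂(x,y)) holds if and only if (t − 1 + 2B)•(y − x) = 0. (This is the coloring condition for the singular knot with two singular crossings in Figure 8, which simplifies to the single relation (t − 1 + 2B)(y − x) = 0.) -/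
variable {R : Type*} [CommRing R] {M : Type*} [AddCommGroup M] [Module R M]

theorem coloring_condition_figure8 (t B : R) (ht : t ^ 2 = 1) (hB : B * (1 + t) = 0) (htB : t = (1 - B) ^ 2) :
    ∀ x y : M,
      (x = R1 t B (R1 t B x y) (R2 B x y) ∧ y = R2 B (R1 t B x y) (R2 B x y)) ↔
        (t - 1 + 2 * B) • (y - x) = 0 := by
  intro x y
  have hc : t - 1 + 2 * B = B ^ 2 := by linear_combination htB
  have h1 : R1 t B (R1 t B x y) (R2 B x y) = x + (B ^ 2) • (y - x) := by
    simp only [R1, R2]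
    match_scalars
    · linear_combination ht + hB - htB
    · linear_combination -ht - hB + htB
  have h2 : R2 B (R1 t B x y) (R2 B x y) = y + (B ^ 2) • (y - x) := by
    simp only [R1, R2]
    match_scalars
    · linear_combination hB - htB
    · linear_combination htB - hB
  rw [h1, h2, hc]
  constructor
  · rintro ⟨hx, -⟩
    exact left_eq_add.mp hx
  · intro h
    constructor <;> rw [h, add_zero]
end

section
/- The operations x ∗ y = t•x + (1−t)•y, R₁(x,y) = (1−t−B)•x + (t+B)•y, and R₂(x,y) = (1−B)•x + B•y make M an involutive singquandle: for all x, y, z in M one has x∗x = x, (x∗y)∗y = x, (x∗y)∗z = (x∗z)∗(y∗z), x = R₁(y,R₂(x,y)) = R₂(R₂(x,y),R₁(x,y)), y = R₂(R₁(x,y),x) = R₁(R₂(x,y),R₁(x,y)), R₁(x,y) = R₂(y,R₂(x,y)), R₂(x,y) = R₁(R₁(x,y),x), (y∗z)∗R₂(x,z) = (y∗x)∗R₁(x,z), R₁(x,y) = R₂(y∗x,x), R₂(x,y) = R₁(y∗x,x)∗R₂(y∗x,x), R₁(x∗y,z)∗y = R₁(x,z∗y), and R₂(x∗y,z) = R₂(x,z∗y)∗y.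 -/
variable {R : Type*} [CommRing R] {M : Type*} [AddCommGroup M] [Module R M]

private lemma star_def (t : R) (x y : M) : star t x y = t • x + (1 - t) • y := rfl

theorem alexander_singquandle (t B : R) (ht : t ^ 2 = 1) (hB : B * (1 + t) = 0) (htB : t = (1 - B) ^ 2) :
    ∀ x y z : M,
      star t x x = x ∧
      star t (star t x y) y = x ∧
      star t (star t x y) z = star t (star t x z) (star t y z) ∧
      x = R1 t B y (R2 B x y) ∧
      x = R2 B (R2 B x y) (R1 t B x y) ∧
      y = R2 B (R1 t B x y) x ∧
      y = R1 t B (R2 B x y) (R1 t B x y) ∧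
      R1 t B x y = R2 B y (R2 B x y) ∧
      R2 B x y = R1 t B (R1 t B x y) x ∧
      star t (star t y z) (R2 B x z) = star t (star t y x) (R1 t B x z) ∧
      R1 t B x y = R2 B (star t y x) x ∧
      R2 B x y = star t (R1 t B (star t y x) x) (R2 B (star t y x) x) ∧
      star t (R1 t B (star t x y) z) y = R1 t B x (star t z y) ∧
      R2 B (star t x y) z = star t (R2 B x (star t z y)) y := by
  have hbt : B * t = -B := by linear_combination hB
  have hb2 : B ^ 2 = 2 * B + t - 1 := by linear_combination -htB
  intro x y z
  refine ⟨?_, ?_, ?_, ?_, ?_, ?_, ?_, ?_, ?_, ?_, ?_, ?_, ?_, ?_⟩ <;>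
      simp only [star_def, R1, R2]
  · match_scalars
    · ring
  · match_scalars
    · linear_combination ht
    · linear_combination -ht
  · match_scalars
    · ring
    · ring
    · ring
  · match_scalars
    · linear_combination hbt + hb2
    · linear_combination -hbt - hb2
  · match_scalars
    · linear_combination hbt
    · linear_combination -hbt
  · match_scalars
    · linear_combination hbt + hb2
    · linear_combination -hbt - hb2
  · match_scalars
    · linear_combination -ht - hbt
    · linear_combination ht + hbt
  · match_scalars
    · linear_combination hb2
    · linear_combination -hb2
  · match_scalars
    · linear_combination -ht - 2 * hbt - hb2
    · linear_combination ht + 2 * hbt + hb2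
  · match_scalars
    · ring
    · ring
    · ring
  · match_scalars
    · linear_combination -hbt
    · linear_combination hbt
  · match_scalars
    · linear_combination -t * ht - hbt
    · linear_combination t * ht + hbt
  · match_scalars
    · linear_combination (-t - B + 1) * ht
    · linear_combination (t + B - 1) * ht
    · ring
  · match_scalars
    · ring
    · linear_combination B * ht
    · linear_combination -B * ht
end
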